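/- Let a, b, c be nonnegative integers and let k ≥ 3. Let S be the multiset consisting of 2^k − 3 copies of a and one copy each of b and c, and suppose S is realized by some F_2-linear map between binary linear codes. Then the following are equivalent: (1) S is 2-projection-forcing; (2) the set {a, b, c} satisfies the triangle inequality (a ≤ b + c, b ≤ a + c, c ≤ a + b) and 3a − b − c ≥ 0; (3) the four inequalities a < b + c + 2^{k−1}, b < a + c + 2^{k−1}, c < a + b + 2^{k−1}, and b + c < 3a + 2^{k−1} all hold. -/

import Mathlib

open Matrix

noncomputable section

instance instFiniteProjectivization (K V : Type*) [DivisionRing K] [AddCommGroup V] [Module K V]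
    [Finite V] : Finite (Projectivization K V) :=
  Quotient.finite _

noncomputable instance instFintypeProjectivization (K V : Type*) [DivisionRing K] [AddCommGroup V]
    [Module K V] [Finite V] : Fintype (Projectivization K V) :=
  Fintype.ofFinite _

noncomputable instance instDecEqProjectivization (K V : Type*) [DivisionRing K] [AddCommGroup V]
    [Module K V] : DecidableEq (Projectivization K V) :=
  Classical.decEq _

/-- The projective multiset of weight changes of a linear map between linear codes
`U ⊆ F^n` and `V ⊆ F^m`: the multiset `{w(u) - w(φ(u)) : u ∈ P(U)}`. -/
def projWeightChanges {F : Type} [Field F] [Fintype F] [DecidableEq F] {n m : ℕ}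
    {U : Submodule F (Fin n → F)} {V : Submodule F (Fin m → F)} (φ : U →ₗ[F] V) : Multiset ℤ :=
  (Finset.univ : Finset (Projectivization F U)).val.map
    fun p => (hammingNorm (p.rep : Fin n → F) : ℤ) - (hammingNorm ((φ p.rep : V) : Fin m → F) : ℤ)

/-- S is realized by some F-linear map between linear codes. -/
def Realizes (F : Type) [Field F] [Fintype F] [DecidableEq F] (S : Multiset ℤ) : Prop :=
  ∃ (n m : ℕ) (U : Submodule F (Fin n → F)) (V : Submodule F (Fin m → F)) (φ : U →ₗ[F] V),
    projWeightChanges φ = S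

/-- A coordinate projection up to monomial equivalence: multiplication by a matrix
with at most one nonzero entry in each row and each column. -/
def IsProjection {F : Type} [Field F] [Fintype F] [DecidableEq F] {n m : ℕ}
    {U : Submodule F (Fin n → F)} {V : Submodule F (Fin m → F)} (φ : U →ₗ[F] V) : Prop :=
  ∃ M : Matrix (Fin m) (Fin n) F,
    (∀ u : U, ((φ u : Fin m → F)) = M.mulVec (u : Fin n → F)) ∧
    (∀ i j j', M i j ≠ 0 → M i j' ≠ 0 → j = j') ∧
    (∀ i i' j, M i j ≠ 0 → M i' j ≠ 0 → i = i')

/-- A monomial equivalence: multiplication by an n × n matrix with exactly one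
nonzero entry in each row and each column. -/
def IsMonomialEquiv {F : Type} [Field F] [Fintype F] [DecidableEq F] {n : ℕ}
    {U V : Submodule F (Fin n → F)} (φ : U →ₗ[F] V) : Prop :=
  ∃ M : Matrix (Fin n) (Fin n) F,
    (∀ u : U, ((φ u : Fin n → F)) = M.mulVec (u : Fin n → F)) ∧
    (∀ i, ∃! j, M i j ≠ 0) ∧
    (∀ j, ∃! i, M i j ≠ 0)

/-- S is q-projection-forcing: every linear map over a field of order q realizing S
is a projection. -/
def ProjectionForcing (q : ℕ) (S : Multiset ℤ) : Prop :=
  ∀ (F : Type) [Field F] [Fintype F] [DecidableEq F], Fintype.card F = q →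
    ∀ (n m : ℕ) (U : Submodule F (Fin n → F)) (V : Submodule F (Fin m → F))
      (φ : U →ₗ[F] V), projWeightChanges φ = S → IsProjection φ

/-- The matrix M_{k,q}: rows and columns indexed by points of PG(k-1,q), with (v,w)
entry 0 if v ⬝ w = 0 and 1 otherwise. -/
def Mkq (F : Type) [Field F] [Fintype F] [DecidableEq F] (k : ℕ) :
    Matrix (Projectivization F (Fin k → F)) (Projectivization F (Fin k → F)) ℝ :=
  Matrix.of fun v w => if dotProduct v.rep w.rep = 0 then (0 : ℝ) else 1

/-- The q-ary split difference of a multiset S. -/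
def splitDiff (q k : ℕ) (S : Multiset ℤ) : ℤ :=
  (((S.sort (· ≤ ·)).take (q ^ (k - 1))).sum) -
    ((q : ℤ) - 1) * (((S.sort (· ≤ ·)).drop (q ^ (k - 1))).sum)

end

/-!
Over `𝔽₂` read every coordinate of `U`, and every coordinate of `V` pulled back along `φ`,
as a linear functional on `U`; a Hamming weight counts the functionals that do not vanish at a
vector. Two such functionals `h ≠ 0`, `ℓ` are simultaneously nonzero on exactly a quarter of `U`
(a half if `ℓ = h`), so summing the weight change `δ` off the hyperplane `ker h` inverts
the weights: `|U| · (D h - E h) = 4 ∑_{h u ≠ 0} δ u - 2 ∑_u δ u`, where `D h` and `E h` count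
how often `h` occurs among the domain and codomain functionals. Matching codomain to domain
coordinates shows that `φ` is a projection iff `E h ≤ D h` for all `h ≠ 0`.

If `δ` is `a` except at two vectors `p`, `q`, where it is `b` and `c`, the inversion gives
`2^(k-1) (D h - E h) = 3a - b - c + 2(b - a)[h p ≠ 0] + 2(c - a)[h q ≠ 0]`, and for `k ≥ 3`
all four patterns of `(h p, h q)` occur. Hence projection-forcing means that `3a - b - c`,
`a + b - c`, `a - b + c`, `b + c - a` are nonnegative; being multiples of `2^(k-1)`, they are
nonnegative iff they exceed `-2^(k-1)`.
-/

open Finset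

section TwoElementField

variable {F : Type*} [Field F] [Fintype F]

lemma eq_zero_or_eq_one_of_card_eq_two (hF : Fintype.card F = 2) (x : F) : x = 0 ∨ x = 1 := by
  obtain ⟨y, rfl⟩ := (ZMod.ringEquivOfPrime F Nat.prime_two hF).surjective x
  fin_cases y
  · exact Or.inl (map_zero _)
  · exact Or.inr (map_one _)

lemma ne_zero_iff_eq_one_of_card_eq_two (hF : Fintype.card F = 2) {x : F} : x ≠ 0 ↔ x = 1 :=
  ⟨(eq_zero_or_eq_one_of_card_eq_two hF x).resolve_left, fun h => h ▸ one_ne_zero⟩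

lemma add_eq_zero_iff_eq_of_card_eq_two (hF : Fintype.card F = 2) {x y : F} :
    x + y = 0 ↔ y = x := by
  have := charP_of_card_eq_prime (p := 2) hF
  rw [add_eq_zero_iff_eq_neg', CharTwo.neg_eq]

lemma Projectivization.mk_eq_mk_iff_of_card_eq_two (hF : Fintype.card F = 2)
    {W : Type*} [AddCommGroup W] [Module F W] {v w : W} (hv : v ≠ 0) (hw : w ≠ 0) :
    Projectivization.mk F v hv = Projectivization.mk F w hw ↔ v = w := by
  refine ⟨fun h => ?_, fun h => by subst h; rfl⟩
  obtain ⟨a, rfl⟩ := (Projectivization.mk_eq_mk_iff F v w hv hw).1 h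
  rw [Units.smul_def, (ne_zero_iff_eq_one_of_card_eq_two hF).1 a.ne_zero, one_smul]

variable [DecidableEq F]

lemma ite_ne_zero_add_ite_ne_zero_of_card_eq_two (hF : Fintype.card F = 2) (x y : F) :
    ((if x ≠ 0 then 1 else 0) + if y ≠ 0 then 1 else 0) =
      (if x + y ≠ 0 then 1 else 0) + 2 * if x ≠ 0 ∧ y ≠ 0 then 1 else 0 := by
  have h11 : (1 : F) + 1 = 0 := (add_eq_zero_iff_eq_of_card_eq_two hF).2 rfl
  rcases eq_zero_or_eq_one_of_card_eq_two hF x with rfl | rfl <;>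
    rcases eq_zero_or_eq_one_of_card_eq_two hF y with rfl | rfl <;>
    simp [h11]

end TwoElementField

section LinearFunctionals

variable {F W : Type*} [Field F] [Fintype F] [AddCommGroup W] [Module F W] [Fintype W]

lemma exists_ne_zero_apply_eq_apply_eq (hF : Fintype.card F = 2) (hW : 4 < Fintype.card W)
    {p q : W} (hp : p ≠ 0) (hq : q ≠ 0) (hpq : p ≠ q) (s t : F) :
    ∃ h : W →ₗ[F] F, h ≠ 0 ∧ h p = s ∧ h q = t := by
  have hsep {x : W} {P : Submodule F W} (hx : x ∉ P) :
      ∃ h : W →ₗ[F] F, h x = 1 ∧ ∀ y ∈ P, h y = 0 := by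
    obtain ⟨h, hhx, hP⟩ := P.exists_dual_map_eq_bot_of_notMem hx inferInstance
    exact ⟨h, (ne_zero_iff_eq_one_of_card_eq_two hF).1 hhx, fun y hy => by
      rw [← Submodule.mem_bot F, ← hP]
      exact Submodule.mem_map_of_mem hy⟩
  have hnot {x y : W} (hx : x ≠ 0) (hxy : x ≠ y) : x ∉ F ∙ y := by
    rw [Submodule.mem_span_singleton]
    rintro ⟨r, rfl⟩
    rcases eq_zero_or_eq_one_of_card_eq_two hF r with rfl | rfl <;> simp_all
  obtain ⟨hb, hbp, hbq⟩ := hsep (hnot hp hpq)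
  obtain ⟨hc, hcq, hcp⟩ := hsep (hnot hq hpq.symm)
  replace hbq := hbq q (Submodule.mem_span_singleton_self q)
  replace hcp := hcp p (Submodule.mem_span_singleton_self p)
  obtain ⟨r, hr⟩ : ∃ r, r ∉ Submodule.span F {p, q} := by
    by_contra! hall
    have := Fintype.card_le_of_surjective (fun st : F × F => st.1 • p + st.2 • q) fun r => by
      obtain ⟨y, z, hyz⟩ := Submodule.mem_span_pair.1 (hall r)
      exact ⟨(y, z), hyz⟩
    simp only [Fintype.card_prod, hF] at this
    omega
  obtain ⟨h₀, hr₀, hpq₀⟩ := hsep hr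
  by_cases hst : s = 0 ∧ t = 0
  · refine ⟨h₀, fun h => by simp [h] at hr₀, ?_, ?_⟩
    · rw [hst.1, hpq₀ p (Submodule.subset_span (by simp))]
    · rw [hst.2, hpq₀ q (Submodule.subset_span (by simp))]
  · refine ⟨s • hb + t • hc, fun h0 => hst ?_, by simp [hbp, hcp], by simp [hbq, hcq]⟩
    exact ⟨by simpa [hbp, hcp] using LinearMap.congr_fun h0 p,
      by simpa [hbq, hcq] using LinearMap.congr_fun h0 q⟩

variable [DecidableEq F]

lemma two_mul_card_apply_ne_zero (hF : Fintype.card F = 2) {ℓ : W →ₗ[F] F}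
    (hℓ : ℓ ≠ 0) :
    2 * #{u | ℓ u ≠ 0} = Fintype.card W := by
  obtain ⟨u₀, hu₀⟩ := DFunLike.ne_iff.1 hℓ
  rw [LinearMap.zero_apply, ne_zero_iff_eq_one_of_card_eq_two hF] at hu₀
  have hkernel : #{u | ¬ℓ u ≠ 0} = #{u | ℓ u ≠ 0} :=
    card_nbij' (· + u₀) (· - u₀) (fun u hu => by simp_all)
      (fun u hu => by simp_all [ne_zero_iff_eq_one_of_card_eq_two hF])
      (fun u _ => add_sub_cancel_right u u₀) (fun u _ => sub_add_cancel u u₀)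
  have hsplit := card_filter_add_card_filter_not (s := univ) (fun u : W => ℓ u ≠ 0)
  rw [card_univ, hkernel] at hsplit
  omega

lemma card_apply_ne_zero_add_card_apply_ne_zero (hF : Fintype.card F = 2) (h ℓ : W →ₗ[F] F) :
    #{u | h u ≠ 0} + #{u | ℓ u ≠ 0} =
      #{u | (h + ℓ) u ≠ 0} + 2 * #{u | h u ≠ 0 ∧ ℓ u ≠ 0} := by
  simp only [card_filter, ← sum_add_distrib, mul_sum, LinearMap.add_apply]
  exact sum_congr rfl fun u _ => ite_ne_zero_add_ite_ne_zero_of_card_eq_two hF (h u) (ℓ u)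

lemma four_mul_card_apply_ne_zero_and (hF : Fintype.card F = 2) {h : W →ₗ[F] F} (hh : h ≠ 0)
    (ℓ : W →ₗ[F] F) [Decidable (ℓ = h)] :
    4 * #{u | h u ≠ 0 ∧ ℓ u ≠ 0} =
      2 * #{u | ℓ u ≠ 0} + Fintype.card W * if ℓ = h then 1 else 0 := by
  have hcount := two_mul_card_apply_ne_zero hF hh
  by_cases hℓ0 : ℓ = 0
  · subst hℓ0
    simp [Ne.symm hh]
  by_cases hℓh : ℓ = h
  · subst hℓh
    simp only [and_self, if_true]
    omega
  have hsum : h + ℓ ≠ 0 := fun hzero => hℓh <| LinearMap.ext fun u => by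
    simpa using (add_eq_zero_iff_eq_of_card_eq_two hF).1 (LinearMap.congr_fun hzero u)
  have := card_apply_ne_zero_add_card_apply_ne_zero hF h ℓ
  have := two_mul_card_apply_ne_zero hF hℓ0
  have := two_mul_card_apply_ne_zero hF hsum
  rw [if_neg hℓh]
  omega

end LinearFunctionals

section CoordinateFunctionals

variable {F W ι : Type*} [Field F] [DecidableEq F] [AddCommGroup W] [Module F W] [Fintype ι]

def coordWeight (x : ι → W →ₗ[F] F) (u : W) : ℕ := #{i | x i u ≠ 0}

noncomputable def coordMult (x : ι → W →ₗ[F] F) (h : W →ₗ[F] F) : ℕ :=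
  Nat.card {i // x i = h}

lemma sum_coordWeight (x : ι → W →ₗ[F] F) (s : Finset W) :
    ∑ u ∈ s, coordWeight x u = ∑ i, #{u ∈ s | x i u ≠ 0} := by
  simp only [coordWeight, card_filter]
  exact sum_comm

theorem four_mul_sum_coordWeight [Fintype F] [Fintype W] (hF : Fintype.card F = 2)
    (x : ι → W →ₗ[F] F) {h : W →ₗ[F] F} (hh : h ≠ 0) :
    4 * ∑ u with h u ≠ 0, coordWeight x u =
      2 * ∑ u, coordWeight x u + Fintype.card W * coordMult x h := by
  classical
  rw [sum_coordWeight, sum_coordWeight, coordMult, Nat.card_eq_fintype_card, Fintype.card_subtype,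
    card_filter, mul_sum, mul_sum, mul_sum, ← sum_add_distrib]
  refine sum_congr rfl fun i _ => ?_
  rw [filter_filter]
  exact four_mul_card_apply_ne_zero_and hF hh (x i)

end CoordinateFunctionals

lemma exists_of_map_eq_replicate_add_pair {α : Type*} [DecidableEq α] {s : Finset α}
    {f : α → ℤ} {N : ℕ} {a b c : ℤ} (hs : s.val.map f = Multiset.replicate N a + {b, c}) :
    #s = N + 2 ∧ ∃ p ∈ s, ∃ q ∈ s, p ≠ q ∧
      ∀ x ∈ s, f x = a + (if x = p then b - a else 0) + (if x = q then c - a else 0) := by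
  have hcard : #s = N + 2 := by simpa using congrArg Multiset.card hs
  have hS : s.val.map f = b ::ₘ c ::ₘ Multiset.replicate N a := by
    rw [hs, add_comm]
    rfl
  obtain ⟨p, hp, hfp⟩ := Multiset.mem_map.1 (hS ▸ Multiset.mem_cons_self b _)
  rw [← Multiset.cons_erase hp, Multiset.map_cons, hfp, Multiset.cons_inj_right] at hS
  obtain ⟨q, hq, hfq⟩ := Multiset.mem_map.1 (hS ▸ Multiset.mem_cons_self c _)
  rw [← Multiset.cons_erase hq, Multiset.map_cons, hfq, Multiset.cons_inj_right] at hS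
  obtain ⟨hqp, hqs⟩ := s.nodup.mem_erase_iff.1 hq
  refine ⟨hcard, p, hp, q, hqs, hqp.symm, fun x hx => ?_⟩
  by_cases hxp : x = p
  · simp [hxp, hfp, hqp.symm]
  by_cases hxq : x = q
  · simp [hxq, hfq, hqp]
  have hx' : x ∈ (s.val.erase p).erase q := by
    rw [(s.nodup.erase p).mem_erase_iff, s.nodup.mem_erase_iff]
    exact ⟨hxq, hxp, hx⟩
  simp [hxp, hxq, Multiset.eq_of_mem_replicate (hS ▸ Multiset.mem_map_of_mem f hx')]

lemma exists_embedding_comp_eq_iff {α β γ : Type*} [Finite α] [Finite β] (f : α → γ)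
    (g : β → γ) :
    (∃ e : α ↪ β, ∀ a, g (e a) = f a) ↔
      ∀ c, Nat.card {a // f a = c} ≤ Nat.card {b // g b = c} := by
  classical
  have := Fintype.ofFinite α
  have := Fintype.ofFinite β
  refine ⟨fun ⟨e, he⟩ c =>
    Nat.card_le_card_of_injective (fun a => ⟨e a, (he a).trans a.2⟩)
      fun a a' h => Subtype.ext (e.injective (congrArg Subtype.val h)), fun h => ?_⟩
  have fiber (c : γ) : {a // f a = c} ↪ {b // g b = c} :=
    (Function.Embedding.nonempty_of_card_le
      (by simpa only [Nat.card_eq_fintype_card] using h c)).some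
  refine ⟨(Equiv.sigmaFiberEquiv f).symm.toEmbedding.trans
    ((Function.Embedding.sigmaMap (Function.Embedding.refl γ) fiber).trans
      (Equiv.sigmaFiberEquiv g).toEmbedding), fun a => (fiber (f a) ⟨a, rfl⟩).2⟩

lemma Int.nonneg_iff_neg_lt_of_dvd {N x : ℤ} (hN : 0 < N) (hx : N ∣ x) :
    0 ≤ x ↔ -N < x := by
  obtain ⟨t, rfl⟩ := hx
  refine ⟨fun h => by linarith, fun h => mul_nonneg hN.le ?_⟩
  by_contra! ht
  nlinarith [show t ≤ -1 by omega]

section LinearCodes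

variable {F : Type} [Field F] {n m : ℕ} {U : Submodule F (Fin n → F)}
  {V : Submodule F (Fin m → F)}

def domCoord (U : Submodule F (Fin n → F)) (j : Fin n) : U →ₗ[F] F :=
  LinearMap.proj j ∘ₗ U.subtype

def codCoord (φ : U →ₗ[F] V) (i : Fin m) : U →ₗ[F] F :=
  domCoord V i ∘ₗ φ

@[simp] lemma domCoord_apply (j : Fin n) (u : U) : domCoord U j u = (u : Fin n → F) j := rfl

@[simp] lemma codCoord_apply (φ : U →ₗ[F] V) (i : Fin m) (u : U) :
    codCoord φ i u = (φ u : Fin m → F) i := rfl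

variable [DecidableEq F]

def weightChange (φ : U →ₗ[F] V) (u : U) : ℤ :=
  hammingNorm (u : Fin n → F) - hammingNorm (φ u : Fin m → F)

noncomputable def coordExcess (φ : U →ₗ[F] V) (h : U →ₗ[F] F) : ℤ :=
  coordMult (domCoord U) h - coordMult (codCoord φ) h

lemma weightChange_eq (φ : U →ₗ[F] V) (u : U) :
    weightChange φ u = coordWeight (domCoord U) u - coordWeight (codCoord φ) u := rfl

@[simp] lemma weightChange_zero (φ : U →ₗ[F] V) : weightChange φ 0 = 0 := by
  simp [weightChange_eq, coordWeight]

variable [Fintype F]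

lemma isProjection_iff_exists_embedding (hF : Fintype.card F = 2) (φ : U →ₗ[F] V) :
    IsProjection φ ↔
      ∃ e : {i // codCoord φ i ≠ 0} ↪ Fin n, ∀ i, domCoord U (e i) = codCoord φ i := by
  classical
  constructor
  · rintro ⟨M, hM, hrow, hcol⟩
    have hφ (i : Fin m) (u : U) : codCoord φ i u = ∑ j, M i j * (u : Fin n → F) j :=
      congrFun (hM u) i
    have hsupp (i : {i // codCoord φ i ≠ 0}) : ∃ j, M i j ≠ 0 := by
      by_contra! hzero
      exact i.2 (LinearMap.ext fun u => by simp [hφ, hzero])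
    choose J hJ using hsupp
    refine ⟨⟨J, fun i i' h => Subtype.ext (hcol _ _ _ (hJ i) (h ▸ hJ i'))⟩, fun i => ?_⟩
    refine LinearMap.ext fun u => ?_
    have hrow' (j : Fin n) (hj : j ≠ J i) : M i j = 0 :=
      not_not.1 fun hM => hj (hrow _ _ _ hM (hJ i))
    rw [hφ, sum_eq_single (J i) (fun j _ hj => by rw [hrow' j hj, zero_mul]) (by simp),
      (ne_zero_iff_eq_one_of_card_eq_two hF).1 (hJ i), one_mul]
    rfl
  · rintro ⟨e, he⟩
    refine ⟨Matrix.of fun i j => if ∃ hi : codCoord φ i ≠ 0, e ⟨i, hi⟩ = j then 1 else 0,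
      fun u => funext fun i => ?_, ?_, ?_⟩
    · by_cases hi : codCoord φ i = 0
      · have hφi := LinearMap.congr_fun hi u
        simp only [codCoord_apply, LinearMap.zero_apply] at hφi
        simp [Matrix.mulVec, dotProduct, hi, hφi]
      · have hcond (j : Fin n) :
            (∃ hi' : codCoord φ i ≠ 0, e ⟨i, hi'⟩ = j) ↔ e ⟨i, hi⟩ = j :=
          ⟨fun ⟨_, h⟩ => h, fun h => ⟨hi, h⟩⟩
        simp only [Matrix.mulVec, dotProduct, Matrix.of_apply, hcond, ite_mul, one_mul, zero_mul,
          sum_ite_eq, mem_univ, if_true]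
        rw [← codCoord_apply, ← he ⟨i, hi⟩, domCoord_apply]
    · simp only [Matrix.of_apply, ne_eq, ite_eq_right_iff, one_ne_zero, imp_false, not_not]
      rintro i j j' ⟨hi, rfl⟩ ⟨hi', rfl⟩
      rfl
    · simp only [Matrix.of_apply, ne_eq, ite_eq_right_iff, one_ne_zero, imp_false, not_not]
      rintro i i' j ⟨hi, rfl⟩ ⟨hi', h⟩
      exact congrArg Subtype.val (e.injective h).symm

theorem isProjection_iff_forall_coordExcess_nonneg (hF : Fintype.card F = 2) (φ : U →ₗ[F] V) :
    IsProjection φ ↔ ∀ h : U →ₗ[F] F, h ≠ 0 → 0 ≤ coordExcess φ h := by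
  have hfiber {h : U →ₗ[F] F} (hh : h ≠ 0) :
      Nat.card {i : {i // codCoord φ i ≠ 0} // codCoord φ i = h} = coordMult (codCoord φ) h :=
    Nat.card_congr <| Equiv.subtypeSubtypeEquivSubtype (p := fun i => codCoord φ i ≠ 0)
      (q := fun i => codCoord φ i = h) fun hi => by rwa [hi]
  rw [isProjection_iff_exists_embedding hF]
  refine (exists_embedding_comp_eq_iff (fun i : {i // codCoord φ i ≠ 0} => codCoord φ i)
    (domCoord U)).trans ⟨fun H h hh => ?_, fun H h => ?_⟩
  · rw [coordExcess, sub_nonneg, Nat.cast_le, ← hfiber hh]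
    exact H h
  · by_cases hh : h = 0
    · have : IsEmpty {i : {i // codCoord φ i ≠ 0} // codCoord φ i = h} :=
        ⟨fun i => i.1.2 (i.2.trans hh)⟩
      simp
    · rw [hfiber hh]
      exact Nat.cast_le.1 (sub_nonneg.1 (H h hh))

variable [Fintype U]

theorem card_mul_coordExcess (hF : Fintype.card F = 2) (φ : U →ₗ[F] V)
    {h : U →ₗ[F] F} (hh : h ≠ 0) :
    Fintype.card U * coordExcess φ h =
      4 * ∑ u with h u ≠ 0, weightChange φ u - 2 * ∑ u, weightChange φ u := by
  have hdom := congrArg (Nat.cast : ℕ → ℤ) (four_mul_sum_coordWeight hF (domCoord U) hh)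
  have hcod := congrArg (Nat.cast : ℕ → ℤ) (four_mul_sum_coordWeight hF (codCoord φ) hh)
  push_cast at hdom hcod
  simp only [weightChange_eq, sum_sub_distrib, coordExcess]
  linear_combination hcod - hdom

lemma projWeightChanges_eq_map_weightChange (hF : Fintype.card F = 2) (φ : U →ₗ[F] V) :
    projWeightChanges φ = ({u | u ≠ 0} : Finset U).val.map (weightChange φ) := by
  have hrep (u : U) (hu : u ≠ 0) : (Projectivization.mk F u hu).rep = u :=
    (Projectivization.mk_eq_mk_iff_of_card_eq_two hF _ hu).1 (Projectivization.mk_rep _)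
  refine (Multiset.map_eq_map_of_bij_of_nodup _ _ (nodup _) (nodup _)
    (fun u hu => Projectivization.mk F u (mem_filter.1 hu).2) (fun _ _ => mem_univ _)
    (fun _ _ _ _ huv => (Projectivization.mk_eq_mk_iff_of_card_eq_two hF _ _).1 huv)
    (fun p _ => ⟨p.rep, by simp [p.rep_nonzero], p.mk_rep⟩)
    (fun _ _ => by simp only [weightChange, hrep])).symm

variable {k a b c : ℕ}

theorem exists_sum_weightChange_eq (hF : Fintype.card F = 2) (hk : 2 ≤ k) {φ : U →ₗ[F] V}
    (hφ : projWeightChanges φ =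
      Multiset.replicate (2 ^ k - 3) (a : ℤ) + {(b : ℤ), (c : ℤ)}) :
    Fintype.card U = 2 ^ k ∧ ∃ p q : U, p ≠ 0 ∧ q ≠ 0 ∧ p ≠ q ∧
      ∀ t : Finset U, 0 ∉ t → ∑ u ∈ t, weightChange φ u =
        a * #t + (if p ∈ t then (b : ℤ) - a else 0) + (if q ∈ t then (c : ℤ) - a else 0) := by
  rw [projWeightChanges_eq_map_weightChange hF] at hφ
  obtain ⟨hcard, p, hp, q, hq, hpq, hδ⟩ := exists_of_map_eq_replicate_add_pair hφ
  rw [filter_ne', card_erase_of_mem (mem_univ _), card_univ] at hcard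
  have : 2 ^ 2 ≤ 2 ^ k := Nat.pow_le_pow_right two_pos hk
  refine ⟨by omega, p, q, (mem_filter.1 hp).2, (mem_filter.1 hq).2, hpq, fun t ht => ?_⟩
  have hδt (u : U) (hu : u ∈ t) := hδ u (mem_filter.2 ⟨mem_univ _, fun h0 => ht (h0 ▸ hu)⟩)
  rw [sum_congr rfl hδt, sum_add_distrib, sum_add_distrib, sum_ite_eq', sum_ite_eq', sum_const,
    nsmul_eq_mul, mul_comm]

theorem two_pow_mul_coordExcess (hF : Fintype.card F = 2) (hk : 2 ≤ k) {φ : U →ₗ[F] V}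
    (hφ : projWeightChanges φ =
      Multiset.replicate (2 ^ k - 3) (a : ℤ) + {(b : ℤ), (c : ℤ)}) :
    Fintype.card U = 2 ^ k ∧ ∃ p q : U, p ≠ 0 ∧ q ≠ 0 ∧ p ≠ q ∧
      ∀ h : U →ₗ[F] F, h ≠ 0 → 2 ^ (k - 1) * coordExcess φ h =
        3 * a - b - c + (if h p ≠ 0 then 2 * ((b : ℤ) - a) else 0) +
          (if h q ≠ 0 then 2 * ((c : ℤ) - a) else 0) := by
  obtain ⟨hcard, p, q, hp, hq, hpq, hsum⟩ := exists_sum_weightChange_eq hF hk hφ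
  refine ⟨hcard, p, q, hp, hq, hpq, fun h hh => ?_⟩
  obtain ⟨N, hN⟩ : ∃ N, 2 ^ (k - 1) = N := ⟨_, rfl⟩
  have hpow : 2 ^ k = 2 * N := by rw [← hN, ← pow_succ']; congr 1; omega
  have hmain := card_mul_coordExcess hF φ hh
  have hhalf := two_mul_card_apply_ne_zero hF hh
  rw [hcard, hpow] at hhalf
  have hnonzero : ∑ u, weightChange φ u = ∑ u with u ≠ 0, weightChange φ u :=
    (sum_filter_of_ne fun u _ hu hu0 => by simp [hu0] at hu).symm
  have hzero : (0 : U) ∉ ({u | u ≠ 0} : Finset U) := by simp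
  have hzero' : (0 : U) ∉ ({u | h u ≠ 0} : Finset U) := by simp
  rw [hnonzero, hsum _ hzero, hsum _ hzero', filter_ne', card_erase_of_mem (mem_univ _),
    card_univ, hcard, hpow, (by omega : #{u | h u ≠ 0} = N)] at hmain
  rw [show (2 : ℤ) ^ (k - 1) = N by rw [← hN]; push_cast; rfl]
  simp only [mem_filter, mem_univ, true_and, mem_erase, ne_eq, hp, hq, not_false_eq_true,
    and_true, if_true] at hmain
  have hN1 : 1 ≤ N := hN ▸ Nat.one_le_two_pow
  rw [Nat.cast_sub (by omega : 1 ≤ 2 * N)] at hmain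
  push_cast at hmain
  split_ifs at hmain ⊢ <;> linarith

theorem image_two_pow_mul_coordExcess (hF : Fintype.card F = 2) (hk : 3 ≤ k) {φ : U →ₗ[F] V}
    (hφ : projWeightChanges φ =
      Multiset.replicate (2 ^ k - 3) (a : ℤ) + {(b : ℤ), (c : ℤ)}) :
    (fun h => 2 ^ (k - 1) * coordExcess φ h) '' {h | h ≠ 0} =
      {3 * (a : ℤ) - b - c, (a : ℤ) + b - c, (a : ℤ) - b + c, (b : ℤ) + c - a} := by
  obtain ⟨hcard, p, q, hp, hq, hpq, hE⟩ := two_pow_mul_coordExcess hF (by omega) hφ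
  have hW : 4 < Fintype.card U := by
    rw [hcard]
    calc 4 < 2 ^ 3 := by norm_num
      _ ≤ 2 ^ k := Nat.pow_le_pow_right two_pos hk
  have hattain (s t : F) (x : ℤ)
      (hx : 3 * a - b - c + (if s ≠ 0 then 2 * ((b : ℤ) - a) else 0) +
        (if t ≠ 0 then 2 * ((c : ℤ) - a) else 0) = x) :
      ∃ h : U →ₗ[F] F, h ≠ 0 ∧ 2 ^ (k - 1) * coordExcess φ h = x := by
    obtain ⟨h, hh, hhp, hhq⟩ := exists_ne_zero_apply_eq_apply_eq hF hW hp hq hpq s t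
    exact ⟨h, hh, by rw [hE h hh, hhp, hhq, hx]⟩
  ext x
  simp only [Set.mem_image, Set.mem_ofPred_eq, Set.mem_insert_iff, Set.mem_singleton_iff]
  constructor
  · rintro ⟨h, hh, rfl⟩
    rw [hE h hh]
    split_ifs <;> omega
  · rintro (rfl | rfl | rfl | rfl)
    · exact hattain 0 0 _ (by simp)
    · exact hattain 1 0 _ (by simp; ring)
    · exact hattain 0 1 _ (by simp; ring)
    · exact hattain 1 1 _ (by simp; ring)

theorem isProjection_iff_of_projWeightChanges_eq (hF : Fintype.card F = 2) (hk : 3 ≤ k)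
    {φ : U →ₗ[F] V}
    (hφ : projWeightChanges φ =
      Multiset.replicate (2 ^ k - 3) (a : ℤ) + {(b : ℤ), (c : ℤ)}) :
    IsProjection φ ↔ a ≤ b + c ∧ b ≤ a + c ∧ c ≤ a + b ∧ b + c ≤ 3 * a := by
  have hpos : (0 : ℤ) < 2 ^ (k - 1) := by positivity
  calc IsProjection φ
      ↔ ∀ x ∈ (fun h => 2 ^ (k - 1) * coordExcess φ h) '' {h | h ≠ 0}, 0 ≤ x := by
        simp [isProjection_iff_forall_coordExcess_nonneg hF, mul_nonneg_iff_of_pos_left hpos]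
    _ ↔ _ := by
        rw [image_two_pow_mul_coordExcess hF hk hφ]
        simp only [Set.mem_insert_iff, Set.mem_singleton_iff, forall_eq_or_imp, forall_eq]
        omega

theorem two_pow_dvd_of_projWeightChanges_eq (hF : Fintype.card F = 2) (hk : 3 ≤ k)
    {φ : U →ₗ[F] V}
    (hφ : projWeightChanges φ =
      Multiset.replicate (2 ^ k - 3) (a : ℤ) + {(b : ℤ), (c : ℤ)}) :
    ∀ x ∈ ({3 * (a : ℤ) - b - c, (a : ℤ) + b - c, (a : ℤ) - b + c, (b : ℤ) + c - a} :
      Set ℤ), ((2 ^ (k - 1) : ℕ) : ℤ) ∣ x := by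
  rw [← image_two_pow_mul_coordExcess hF hk hφ]
  rintro _ ⟨h, -, rfl⟩
  push_cast
  exact dvd_mul_right _ _

end LinearCodes

/-- for `S` consisting of `2^k - 3` copies of `a` and one copy each of `b`, `c`
(`k ≥ 3`), realized by some F₂-linear map, TFAE: (1) S is 2-projection-forcing;
(2) {a,b,c} satisfies the triangle inequality and `3a - b - c ≥ 0`;
(3) `a < b + c + 2^(k-1)`, `b < a + c + 2^(k-1)`, `c < a + b + 2^(k-1)`,
`b + c < 3a + 2^(k-1)`. -/
theorem stmt_10 (k a b c : ℕ) (hk : 3 ≤ k)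
    (hreal : Realizes (ZMod 2) (Multiset.replicate (2 ^ k - 3) (a : ℤ) + {(b : ℤ), (c : ℤ)})) :
    (ProjectionForcing 2 (Multiset.replicate (2 ^ k - 3) (a : ℤ) + {(b : ℤ), (c : ℤ)}) ↔
        (a ≤ b + c ∧ b ≤ a + c ∧ c ≤ a + b ∧ b + c ≤ 3 * a)) ∧
      ((a ≤ b + c ∧ b ≤ a + c ∧ c ≤ a + b ∧ b + c ≤ 3 * a) ↔
        (a < b + c + 2 ^ (k - 1) ∧ b < a + c + 2 ^ (k - 1) ∧ c < a + b + 2 ^ (k - 1) ∧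
          b + c < 3 * a + 2 ^ (k - 1))) := by
  classical
  obtain ⟨n, m, U, V, φ, hφ⟩ := hreal
  have hF : Fintype.card (ZMod 2) = 2 := ZMod.card 2
  refine ⟨⟨fun hforcing => ?_, fun hineq F _ _ _ hF' _ _ _ _ ψ hψ => ?_⟩, ?_⟩
  · exact (isProjection_iff_of_projWeightChanges_eq hF hk hφ).1 (hforcing _ hF _ _ _ _ φ hφ)
  · exact (isProjection_iff_of_projWeightChanges_eq hF' hk hψ).2 hineq
  have hdvd := two_pow_dvd_of_projWeightChanges_eq hF hk hφ
  have hpos : (0 : ℤ) < (2 ^ (k - 1) : ℕ) := by positivity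
  have h₁ := Int.nonneg_iff_neg_lt_of_dvd hpos (hdvd (3 * a - b - c) (by simp))
  have h₂ := Int.nonneg_iff_neg_lt_of_dvd hpos (hdvd (a + b - c) (by simp))
  have h₃ := Int.nonneg_iff_neg_lt_of_dvd hpos (hdvd (a - b + c) (by simp))
  have h₄ := Int.nonneg_iff_neg_lt_of_dvd hpos (hdvd (b + c - a) (by simp))
  generalize 2 ^ (k - 1) = N at *
  omega
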